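/- arXiv:1405.5662 — 4 statements merged into one kernel-verified Lean document; each statement's English description precedes it below -/
import Mathlib

section
/- If a tree automaton A is a quasi-model for a term rewriting system R, then the language L(A) of ground terms accepted by A is closed under rewriting: whenever t ∈ L(A) and t →_R s, also s ∈ L(A). -/
inductive Tm (F : Type) (ar : F → ℕ) (V : Type) : Type
  | var : V → Tm F ar V
  | fn : (f : F) → (Fin (ar f) → Tm F ar V) → Tm F ar V

def Tm.subst {F : Type} {ar : F → ℕ} {V W : Type} (σ : V → Tm F ar W) :
    Tm F ar V → Tm F ar W
  | .var x => σ x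
  | .fn f ts => .fn f (fun i => (ts i).subst σ)

inductive Rew {F : Type} {ar : F → ℕ} {V W : Type}
    (R : Set (Tm F ar V × Tm F ar V)) : Tm F ar W → Tm F ar W → Prop
  | rule (l r : Tm F ar V) (σ : V → Tm F ar W) :
      (l, r) ∈ R → Rew R (l.subst σ) (r.subst σ)
  | congr (f : F) (ts : Fin (ar f) → Tm F ar W) (i : Fin (ar f)) {s' : Tm F ar W} :
      Rew R (ts i) s' → Rew R (.fn f ts) (.fn f (Function.update ts i s'))

def interp {F : Type} {ar : F → ℕ} {V Q : Type}
    (δ : (f : F) → (Fin (ar f) → Q) → Q → Prop) (α : V → Set Q) :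
    Tm F ar V → Set Q
  | .var x => α x
  | .fn f ts => {q | ∃ qs : Fin (ar f) → Q, (∀ i, qs i ∈ interp δ α (ts i)) ∧ δ f qs q}

lemma interp_subst {F : Type} {ar : F → ℕ} {V W Q : Type}
    (δ : (f : F) → (Fin (ar f) → Q) → Q → Prop) (α : W → Set Q)
    (σ : V → Tm F ar W) : ∀ t : Tm F ar V,
    interp δ α (t.subst σ) = interp δ (fun x => interp δ α (σ x)) t
  | .var x => rfl
  | .fn f ts => by
      simp only [Tm.subst, interp]
      ext q
      constructor <;> rintro ⟨qs, h1, h2⟩ <;> refine ⟨qs, fun i => ?_, h2⟩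
      · exact (interp_subst δ α σ (ts i)) ▸ h1 i
      · exact (interp_subst δ α σ (ts i)).symm ▸ h1 i

lemma interp_rew {F : Type} {ar : F → ℕ} {V W Q : Type}
    (δ : (f : F) → (Fin (ar f) → Q) → Q → Prop)
    (R : Set (Tm F ar V × Tm F ar V))
    (hquasi : ∀ l r, (l, r) ∈ R → ∀ α : V → Set Q, interp δ α l ⊆ interp δ α r)
    (α : W → Set Q) {t s : Tm F ar W} (h : Rew R t s) :
    interp δ α t ⊆ interp δ α s := by
  induction h with
  | rule l r σ hR =>
      rw [interp_subst, interp_subst]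
      exact hquasi l r hR _
  | congr f ts i h ih =>
      rintro q ⟨qs, h1, h2⟩
      refine ⟨qs, fun j => ?_, h2⟩
      rcases eq_or_ne j i with rfl | hj
      · simpa using ih (h1 j)
      · simpa [Function.update_of_ne hj] using h1 j

/-- the language of a quasi-model automaton is closed under rewriting. -/
theorem lang_closed_of_quasiModel
    {F : Type} {ar : F → ℕ} {V Q : Type}
    (δ : (f : F) → (Fin (ar f) → Q) → Q → Prop) (Facc : Set Q)
    (R : Set (Tm F ar V × Tm F ar V))
    (hquasi : ∀ l r, (l, r) ∈ R → ∀ α : V → Set Q, interp δ α l ⊆ interp δ α r) :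
    ∀ t s : Tm F ar Empty,
      (interp δ Empty.elim t ∩ Facc).Nonempty → Rew R t s →
      (interp δ Empty.elim s ∩ Facc).Nonempty := by
  rintro t s ⟨q, hq, hF⟩ hrew
  exact ⟨q, interp_rew δ R hquasi _ hrew hq, hF⟩
end

section
/- The term rewriting system consisting of the single rule S x y z → x z (y z) (the S-combinator rule, over signature with binary application and constant S) is non-terminating: the ground term S S S (S S S) (S S S (S S S)) admits an infinite rewrite sequence. More precisely, there exists a ground term admitting an infinite →-reduction. -/
/-- Signature of combinatory logic with just S: binary application and constant S. -/
inductive SSig : Type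
  | ap : SSig
  | S : SSig

/-- Arities: application is binary, S is a constant. -/
def sar : SSig → ℕ
  | .ap => 2
  | .S => 0

/-- Application of terms. -/
def app {V : Type} (a b : Tm SSig sar V) : Tm SSig sar V :=
  .fn .ap ![a, b]

/-- The constant S as a term. -/
def combS {V : Type} : Tm SSig sar V :=
  .fn .S ![]

/-- The S-rule  S x y z → x z (y z)  with variables x, y, z : Fin 3. -/
def SRule : Set (Tm SSig sar (Fin 3) × Tm SSig sar (Fin 3)) :=
  {(app (app (app combS (.var 0)) (.var 1)) (.var 2),
    app (app (.var 0) (.var 2)) (app (.var 1) (.var 2)))}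

/-- The ground term S S S (S S S). -/
def sss : Tm SSig sar Empty := app (app combS combS) combS

lemma subst_app {V W : Type} (σ : V → Tm SSig sar W) (a b : Tm SSig sar V) :
    (app a b).subst σ = app (a.subst σ) (b.subst σ) := by
  show Tm.fn SSig.ap (fun i => ((![a, b] : Fin 2 → _) i).subst σ) = _
  unfold app
  congr 1
  funext i
  fin_cases i <;> rfl

lemma subst_combS {V W : Type} (σ : V → Tm SSig sar W) :
    (combS (V := V)).subst σ = combS := by
  have h0 : (Tm.fn SSig.S ![] : Tm SSig sar V).subst σ
      = Tm.fn SSig.S (fun i => ((![] : Fin (sar SSig.S) → Tm SSig sar V) i).subst σ) := rfl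
  unfold combS
  rw [h0]
  congr 1
  funext i
  exact i.elim0

lemma subst_var {V W : Type} (σ : V → Tm SSig sar W) (x : V) :
    (Tm.var (F := SSig) (ar := sar) x).subst σ = σ x := rfl

lemma rew_head (t1 t2 t3 : Tm SSig sar Empty) :
    Rew SRule (app (app (app combS t1) t2) t3) (app (app t1 t3) (app t2 t3)) := by
  have h := Rew.rule (W := Empty) (R := SRule)
      (app (app (app combS (.var 0)) (.var 1)) (.var 2))
      (app (app (.var 0) (.var 2)) (app (.var 1) (.var 2)))
      ![t1, t2, t3] rfl
  simpa only [subst_app, subst_combS, subst_var, Matrix.cons_val_zero, Matrix.cons_val_one,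
    Matrix.head_cons, Matrix.cons_val_two, Matrix.tail_cons] using h

lemma rew_appL {s s' b : Tm SSig sar Empty} (h : Rew SRule s s') :
    Rew SRule (app s b) (app s' b) := by
  have h0 : Rew SRule ((![s, b] : Fin 2 → Tm SSig sar Empty) 0) s' := by simpa using h
  have h1 := Rew.congr (R := SRule) SSig.ap ![s, b] ((0 : Fin 2)) h0
  have hu : Function.update (![s, b] : Fin 2 → Tm SSig sar Empty) (0 : Fin 2) s' = ![s', b] := by
    funext i
    fin_cases i <;> simp [Function.update]
  show Rew SRule (Tm.fn SSig.ap ![s, b]) (Tm.fn SSig.ap ![s', b])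
  rw [← hu]
  exact h1

lemma rew_foldl (L : List (Tm SSig sar Empty)) {s s' : Tm SSig sar Empty}
    (h : Rew SRule s s') : Rew SRule (L.foldl app s) (L.foldl app s') := by
  induction L generalizing s s' with
  | nil => exact h
  | cons a L ih => exact ih (rew_appL h)

inductive Ok : Tm SSig sar Empty → Prop
  | okA (N : List (Tm SSig sar Empty)) (hN : ∀ a ∈ N, Ok a) : Ok (N.foldl app sss)
  | okB (a : Tm SSig sar Empty) (N : List (Tm SSig sar Empty))
      (ha : Ok a) (hN : ∀ b ∈ N, Ok b) : Ok (N.foldl app (app combS a))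

lemma Ok.app_ok {u v : Tm SSig sar Empty} (hu : Ok u) (hv : Ok v) : Ok (app u v) := by
  cases hu with
  | okA N hN =>
      have he : app (N.foldl app sss) v = (N ++ [v]).foldl app sss := by
        simp [List.foldl_append]
      rw [he]
      refine Ok.okA _ ?_
      intro a ha
      rcases List.mem_append.1 ha with h | h
      · exact hN a h
      · simp only [List.mem_singleton] at h; subst h; exact hv
  | okB a N ha hN =>
      have he : app (N.foldl app (app combS a)) v = (N ++ [v]).foldl app (app combS a) := by
        simp [List.foldl_append]
      rw [he]
      refine Ok.okB a _ ha ?_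
      intro b hb
      rcases List.mem_append.1 hb with h | h
      · exact hN b h
      · simp only [List.mem_singleton] at h; subst h; exact hv

def Alive (t : Tm SSig sar Empty) : Prop :=
  (∃ N : List (Tm SSig sar Empty), 2 ≤ N.length ∧ (∀ a ∈ N, Ok a) ∧ t = N.foldl app sss) ∨
  (∃ (a : Tm SSig sar Empty) (N : List (Tm SSig sar Empty)),
      Ok a ∧ 2 ≤ N.length ∧ (∀ b ∈ N, Ok b) ∧ t = N.foldl app (app combS a))

lemma prog {t : Tm SSig sar Empty} (h : Alive t) :
    ∃ t', Rew SRule t t' ∧ Alive t' := by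
  rcases h with ⟨N, hlen, hok, rfl⟩ | ⟨a, N, ha, hlen, hok, rfl⟩
  · match N, hlen, hok with
    | t3 :: R, hlen, hok =>
      have hR : 1 ≤ R.length := by simpa using hlen
      refine ⟨R.foldl app (app (app combS t3) (app combS t3)), ?_, ?_⟩
      · have h1 := rew_foldl R (rew_head combS combS t3)
        simpa only [sss, List.foldl_cons] using h1
      · right
        have ht3 : Ok t3 := hok t3 (by simp)
        refine ⟨t3, app combS t3 :: R, ht3, by simpa using hR, ?_, by simp⟩
        intro b hb
        rcases List.mem_cons.1 hb with h | h
        · subst h; exact Ok.okB t3 [] ht3 (by simp)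
        · exact hok b (List.mem_cons_of_mem _ h)
  · match N, hlen, hok with
    | t2 :: t3 :: R, _, hok =>
      have step : Rew SRule ((t2 :: t3 :: R).foldl app (app combS a))
          (R.foldl app (app (app a t3) (app t2 t3))) := by
        have h1 := rew_foldl R (rew_head a t2 t3)
        simpa only [List.foldl_cons] using h1
      have ht2 : Ok t2 := hok t2 (by simp)
      have ht3 : Ok t3 := hok t3 (by simp)
      have hR : ∀ b ∈ R, Ok b := fun b hb => hok b (by simp [hb])
      refine ⟨_, step, ?_⟩
      cases ha with
      | okA N₁ hN₁ =>
          left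
          refine ⟨N₁ ++ t3 :: app t2 t3 :: R, by simp only [List.length_append, List.length_cons]; omega, ?_, ?_⟩
          · intro x hx
            rcases List.mem_append.1 hx with h | h
            · exact hN₁ x h
            · rcases List.mem_cons.1 h with h | h
              · subst h; exact ht3
              · rcases List.mem_cons.1 h with h | h
                · subst h; exact ht2.app_ok ht3
                · exact hR x h
          · simp [List.foldl_append]
      | okB a₀ N₁ ha₀ hN₁ =>
          right
          refine ⟨a₀, N₁ ++ t3 :: app t2 t3 :: R, ha₀, by simp only [List.length_append, List.length_cons]; omega, ?_, ?_⟩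
          · intro x hx
            rcases List.mem_append.1 hx with h | h
            · exact hN₁ x h
            · rcases List.mem_cons.1 h with h | h
              · subst h; exact ht3
              · rcases List.mem_cons.1 h with h | h
                · subst h; exact ht2.app_ok ht3
                · exact hR x h
          · simp [List.foldl_append]

lemma alive0 : Alive (app (app sss sss) (app sss sss)) := by
  left
  have hA : Ok sss := by
    have := Ok.okA [] (by simp)
    simpa using this
  refine ⟨[sss, app sss sss], by simp, ?_, by simp⟩
  intro a ha
  rcases List.mem_cons.1 ha with h | h
  · subst h; exact hA
  · simp only [List.mem_singleton] at h; subst h; exact hA.app_ok hA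

noncomputable def chain : ℕ → {t : Tm SSig sar Empty // Alive t}
  | 0 => ⟨_, alive0⟩
  | n + 1 => ⟨(prog (chain n).2).choose, (prog (chain n).2).choose_spec.2⟩

/-- the S-rule is non-terminating; in particular the ground term
S S S (S S S) (S S S (S S S)) admits an infinite rewrite sequence. -/
theorem SRule_nonterminating :
    ∃ seq : ℕ → Tm SSig sar Empty,
      seq 0 = app (app sss sss) (app sss sss) ∧
      ∀ n, Rew SRule (seq n) (seq (n + 1)) := by
  refine ⟨fun n => (chain n).1, rfl, fun n => ?_⟩
  exact (prog (chain n).2).choose_spec.1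
end

section
/- The string rewriting system with rules zL → Lz, Rz → zR, bL → bR, Rb → Lzb (over alphabet {z, L, R, b}) is non-terminating: there exists a string admitting an infinite reduction sequence; for instance every string of the form b zᵐ X zⁿ b with X ∈ {L,R} reduces in one or more steps to another string of that form. -/
/-- Alphabet of the string rewriting system. -/
inductive LRSym : Type
  | z : LRSym
  | L : LRSym
  | R : LRSym
  | b : LRSym

/-- The rules  zL → Lz,  Rz → zR,  bL → bR,  Rb → Lzb. -/
def LRRules : Set (List LRSym × List LRSym) :=
  {([.z, .L], [.L, .z]), ([.R, .z], [.z, .R]),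
   ([.b, .L], [.b, .R]), ([.R, .b], [.L, .z, .b])}

/-- One-step string rewriting: replace a factor matching a left-hand side. -/
def SRew (rules : Set (List LRSym × List LRSym)) (u v : List LRSym) : Prop :=
  ∃ (p s l r : List LRSym), (l, r) ∈ rules ∧ u = p ++ l ++ s ∧ v = p ++ r ++ s

/-- The string  b zᵐ X zⁿ b. -/
def pat (m : ℕ) (X : LRSym) (n : ℕ) : List LRSym :=
  [.b] ++ List.replicate m .z ++ [X] ++ List.replicate n .z ++ [.b]

/-- The language of strings  b zᵐ X zⁿ b  with X ∈ {L, R}. -/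
def LRLang : Set (List LRSym) :=
  {w | ∃ m n X, (X = LRSym.L ∨ X = LRSym.R) ∧ w = pat m X n}

/-- Next state. -/
def nxt : ℕ × LRSym × ℕ → ℕ × LRSym × ℕ
  | (0, .L, n) => (0, .R, n)
  | (m+1, .L, n) => (m, .L, n+1)
  | (m, .R, 0) => (m, .L, 1)
  | (m, .R, n+1) => (m+1, .R, n)
  | _ => (0, .L, 0)

lemma nxt_LR {m n : ℕ} {X : LRSym} (h : X = .L ∨ X = .R) :
    (nxt (m, X, n)).2.1 = .L ∨ (nxt (m, X, n)).2.1 = .R := by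
  rcases h with h | h <;> subst h <;>
    rcases m with _ | m <;> rcases n with _ | n <;> simp [nxt]

lemma step {m n : ℕ} {X : LRSym} (h : X = .L ∨ X = .R) :
    SRew LRRules (pat m X n)
      (pat (nxt (m, X, n)).1 (nxt (m, X, n)).2.1 (nxt (m, X, n)).2.2) := by
  rcases h with h | h <;> subst h
  · rcases m with _ | m
    · exact ⟨[], List.replicate n .z ++ [.b], [.b, .L], [.b, .R], by
        simp [LRRules], by simp [pat, nxt], by simp [pat, nxt]⟩
    · refine ⟨[.b] ++ List.replicate m .z, List.replicate n .z ++ [.b],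
        [.z, .L], [.L, .z], by simp [LRRules], ?_, ?_⟩
      · simp [pat, nxt, List.replicate_succ']
      · simp [pat, nxt, List.replicate_succ]
  · rcases n with _ | n
    · exact ⟨[.b] ++ List.replicate m .z, [], [.R, .b], [.L, .z, .b], by
        simp [LRRules], by simp [pat, nxt], by simp [pat, nxt]⟩
    · refine ⟨[.b] ++ List.replicate m .z, List.replicate n .z ++ [.b],
        [.R, .z], [.z, .R], by simp [LRRules], ?_, ?_⟩
      · simp [pat, nxt, List.replicate_succ]
      · simp [pat, nxt, List.replicate_succ']

lemma iter_LR (k : ℕ) :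
    (nxt^[k] (0, .L, 0)).2.1 = LRSym.L ∨ (nxt^[k] (0, .L, 0)).2.1 = LRSym.R := by
  induction k with
  | zero => simp
  | succ k ih =>
    rw [Function.iterate_succ_apply']
    obtain ⟨m, X, n, h⟩ : ∃ m X n, nxt^[k] (0, LRSym.L, 0) = (m, X, n) :=
      ⟨_, _, _, rfl⟩
    rw [h] at ih ⊢
    exact nxt_LR ih

/-- the system is non-terminating; moreover every string of the
form b zᵐ X zⁿ b with X ∈ {L,R} reduces in one or more steps to another such
string. -/
theorem LRRules_nonterminating :
    (∃ seq : ℕ → List LRSym, ∀ k, SRew LRRules (seq k) (seq (k + 1))) ∧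
    (∀ m n X, (X = LRSym.L ∨ X = LRSym.R) →
      ∃ w ∈ LRLang, Relation.TransGen (SRew LRRules) (pat m X n) w) := by
  constructor
  · refine ⟨fun k => pat (nxt^[k] (0, .L, 0)).1 (nxt^[k] (0, .L, 0)).2.1
      (nxt^[k] (0, .L, 0)).2.2, fun k => ?_⟩
    have := step (m := (nxt^[k] (0, .L, 0)).1) (n := (nxt^[k] (0, .L, 0)).2.2)
      (iter_LR k)
    show SRew LRRules _ (pat (nxt^[k+1] (0, .L, 0)).1 (nxt^[k+1] (0, .L, 0)).2.1
      (nxt^[k+1] (0, .L, 0)).2.2)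
    rw [Function.iterate_succ_apply']
    exact this
  · intro m n X hX
    refine ⟨_, ⟨(nxt (m, X, n)).1, (nxt (m, X, n)).2.2, (nxt (m, X, n)).2.1,
      nxt_LR hX, rfl⟩, Relation.TransGen.single (step hX)⟩
end

section
/- For the string rewriting system with rules zL → Lz, Rz → zR, bL → bR, Rb → Lzb: the language of strings of the form b zᵐ X zⁿ b with X ∈ {L, R} and m, n ≥ 0 is closed under rewriting, is non-empty, and every string in it contains a redex. -/
lemma repl_split {α : Type*} (a : α) :
    ∀ (n : ℕ) (p q t : List α), List.replicate n a ++ t = p ++ q →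
    (∃ k, k ≤ n ∧ p = List.replicate k a ∧ q = List.replicate (n - k) a ++ t) ∨
    (∃ p', p = List.replicate n a ++ p' ∧ t = p' ++ q) := by
  intro n
  induction n with
  | zero =>
    intro p q t h
    simp only [List.replicate_zero, List.nil_append] at h
    exact .inr ⟨p, by simp, h⟩
  | succ n ih =>
    intro p q t h
    cases p with
    | nil => exact .inl ⟨0, by omega, rfl, by simpa using h.symm⟩
    | cons x p' =>
      simp only [List.replicate_succ, List.cons_append, List.cons.injEq] at h
      obtain ⟨hx, h2⟩ := h
      rcases ih p' q t h2 with ⟨k, hk, hp, hq⟩ | ⟨p'', hp, ht⟩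
      · refine .inl ⟨k + 1, by omega, ?_, ?_⟩
        · simp [List.replicate_succ, hx, hp]
        · simpa [Nat.succ_sub_succ] using hq
      · exact .inr ⟨p'', by simp [List.replicate_succ, hx, hp], ht⟩

lemma pat_mem {X : LRSym} (h : X = .L ∨ X = .R) (m n : ℕ) : pat m X n ∈ LRLang :=
  ⟨m, n, X, h, rfl⟩

lemma LR_closure (m n : ℕ) (X : LRSym) (hX : X = .L ∨ X = .R)
    (p s l r : List LRSym) (hr : (l, r) ∈ LRRules)
    (h : pat m X n = p ++ l ++ s) : p ++ r ++ s ∈ LRLang := by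
  simp only [LRRules, Set.mem_insert_iff, Set.mem_singleton_iff, Prod.mk.injEq] at hr
  rcases hr with ⟨hl, hrr⟩ | ⟨hl, hrr⟩ | ⟨hl, hrr⟩ | ⟨hl, hrr⟩ <;> subst hl <;> subst hrr
  · -- rule zL → Lz
    cases p with
    | nil => simp [pat] at h
    | cons x p' =>
      simp only [pat, List.cons_append, List.nil_append, List.append_assoc,
        List.singleton_append, List.cons.injEq] at h
      obtain ⟨hx, h2⟩ := h
      rcases repl_split .z m p' (.z :: .L :: s) _ h2 with ⟨k, hk, hp', hq⟩ | ⟨p'', hp', ht⟩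
      · cases hmk : m - k with
        | zero =>
          rw [hmk] at hq; simp only [List.replicate_zero, List.nil_append,
            List.cons.injEq] at hq
          rcases hX with rfl | rfl <;> simp at hq
        | succ j =>
          rw [hmk] at hq
          simp only [List.replicate_succ, List.cons_append, List.cons.injEq] at hq
          obtain ⟨-, hq2⟩ := hq
          cases j with
          | zero =>
            simp only [List.replicate_zero, List.nil_append, List.cons.injEq] at hq2
            obtain ⟨hXL, hs⟩ := hq2
            refine ⟨k, n + 1, .L, .inl rfl, ?_⟩
            subst hx hp' hs
            simp [pat, List.replicate_succ]
          | succ j' => simp [List.replicate_succ] at hq2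
      · cases p'' with
        | nil =>
          simp only [List.nil_append, List.cons.injEq] at ht
          rcases hX with rfl | rfl <;> simp at ht
        | cons y p3 =>
          simp only [List.cons_append, List.cons.injEq] at ht
          obtain ⟨hXy, ht2⟩ := ht
          rcases repl_split .z n p3 (.z :: .L :: s) _ ht2 with ⟨k', hk', hp3, hq'⟩ | ⟨p4, hp4, hb⟩
          · cases hnk : n - k' with
            | zero => rw [hnk] at hq'; simp at hq'
            | succ j =>
              rw [hnk] at hq'
              simp only [List.replicate_succ, List.cons_append, List.cons.injEq] at hq'
              obtain ⟨-, hq2⟩ := hq'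
              cases j with
              | zero => simp at hq2
              | succ j' => simp [List.replicate_succ] at hq2
          · cases p4 <;> simp at hb
  · -- rule Rz → zR
    cases p with
    | nil => simp [pat] at h
    | cons x p' =>
      simp only [pat, List.cons_append, List.nil_append, List.append_assoc,
        List.singleton_append, List.cons.injEq] at h
      obtain ⟨hx, h2⟩ := h
      rcases repl_split .z m p' (.R :: .z :: s) _ h2 with ⟨k, hk, hp', hq⟩ | ⟨p'', hp', ht⟩
      · cases hmk : m - k with
        | zero =>
          rw [hmk] at hq; simp only [List.replicate_zero, List.nil_append,
            List.cons.injEq] at hq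
          obtain ⟨hXR, hq2⟩ := hq
          have hkm : k = m := by omega
          subst hkm
          cases n with
          | zero => simp at hq2
          | succ n' =>
            simp only [List.replicate_succ, List.cons_append, List.cons.injEq] at hq2
            obtain ⟨-, hs⟩ := hq2
            refine ⟨k + 1, n', .R, .inr rfl, ?_⟩
            subst hx hp' hs
            simp [pat, List.replicate_succ']
        | succ j =>
          rw [hmk] at hq
          simp [List.replicate_succ] at hq
      · cases p'' with
        | nil =>
          simp only [List.nil_append, List.cons.injEq] at ht
          obtain ⟨hXR, ht2⟩ := ht
          cases n with
          | zero => simp at ht2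
          | succ n' =>
            simp only [List.replicate_succ, List.cons_append, List.cons.injEq] at ht2
            obtain ⟨-, hs⟩ := ht2
            refine ⟨m + 1, n', .R, .inr rfl, ?_⟩
            subst hx hp' hs
            simp [pat, List.replicate_succ']
        | cons y p3 =>
          simp only [List.cons_append, List.cons.injEq] at ht
          obtain ⟨hXy, ht2⟩ := ht
          rcases repl_split .z n p3 (.R :: .z :: s) _ ht2 with ⟨k', hk', hp3, hq'⟩ | ⟨p4, hp4, hb⟩
          · cases hnk : n - k' with
            | zero => rw [hnk] at hq'; simp at hq'
            | succ j =>
              rw [hnk] at hq'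
              simp [List.replicate_succ] at hq'
          · cases p4 <;> simp at hb
  · -- rule bL → bR
    cases p with
    | nil =>
      simp only [pat, List.cons_append, List.nil_append, List.append_assoc,
        List.singleton_append, List.cons.injEq] at h
      obtain ⟨-, h2⟩ := h
      cases m with
      | zero =>
        simp only [List.replicate_zero, List.nil_append, List.cons.injEq] at h2
        obtain ⟨hXL, hs⟩ := h2
        refine ⟨0, n, .R, .inr rfl, ?_⟩
        subst hs
        simp [pat]
      | succ m' => simp [List.replicate_succ] at h2
    | cons x p' =>
      simp only [pat, List.cons_append, List.nil_append, List.append_assoc,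
        List.singleton_append, List.cons.injEq] at h
      obtain ⟨hx, h2⟩ := h
      rcases repl_split .z m p' (.b :: .L :: s) _ h2 with ⟨k, hk, hp', hq⟩ | ⟨p'', hp', ht⟩
      · cases hmk : m - k with
        | zero =>
          rw [hmk] at hq; simp only [List.replicate_zero, List.nil_append,
            List.cons.injEq] at hq
          rcases hX with rfl | rfl <;> simp at hq
        | succ j =>
          rw [hmk] at hq
          simp [List.replicate_succ] at hq
      · cases p'' with
        | nil =>
          simp only [List.nil_append, List.cons.injEq] at ht
          rcases hX with rfl | rfl <;> simp at ht
        | cons y p3 =>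
          simp only [List.cons_append, List.cons.injEq] at ht
          obtain ⟨hXy, ht2⟩ := ht
          rcases repl_split .z n p3 (.b :: .L :: s) _ ht2 with ⟨k', hk', hp3, hq'⟩ | ⟨p4, hp4, hb⟩
          · cases hnk : n - k' with
            | zero =>
              rw [hnk] at hq'
              simp only [List.replicate_zero, List.nil_append, List.cons.injEq] at hq'
              obtain ⟨-, hq2⟩ := hq'
              exact absurd hq2 (by simp)
            | succ j =>
              rw [hnk] at hq'
              simp [List.replicate_succ] at hq'
          · cases p4 <;> simp at hb
  · -- rule Rb → Lzb
    cases p with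
    | nil => simp [pat] at h
    | cons x p' =>
      simp only [pat, List.cons_append, List.nil_append, List.append_assoc,
        List.singleton_append, List.cons.injEq] at h
      obtain ⟨hx, h2⟩ := h
      rcases repl_split .z m p' (.R :: .b :: s) _ h2 with ⟨k, hk, hp', hq⟩ | ⟨p'', hp', ht⟩
      · cases hmk : m - k with
        | zero =>
          rw [hmk] at hq; simp only [List.replicate_zero, List.nil_append,
            List.cons.injEq] at hq
          obtain ⟨hXR, hq2⟩ := hq
          have hkm : k = m := by omega
          subst hkm
          cases n with
          | zero =>
            simp only [List.replicate_zero, List.nil_append, List.cons.injEq] at hq2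
            obtain ⟨-, hs⟩ := hq2
            refine ⟨k, 1, .L, .inl rfl, ?_⟩
            subst hx hp' hs
            simp [pat]
          | succ n' => simp [List.replicate_succ] at hq2
        | succ j =>
          rw [hmk] at hq
          simp [List.replicate_succ] at hq
      · cases p'' with
        | nil =>
          simp only [List.nil_append, List.cons.injEq] at ht
          obtain ⟨hXR, ht2⟩ := ht
          cases n with
          | zero =>
            simp only [List.replicate_zero, List.nil_append, List.cons.injEq] at ht2
            obtain ⟨-, hs⟩ := ht2
            refine ⟨m, 1, .L, .inl rfl, ?_⟩
            subst hx hp' hs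
            simp [pat]
          | succ n' => simp [List.replicate_succ] at ht2
        | cons y p3 =>
          simp only [List.cons_append, List.cons.injEq] at ht
          obtain ⟨hXy, ht2⟩ := ht
          rcases repl_split .z n p3 (.R :: .b :: s) _ ht2 with ⟨k', hk', hp3, hq'⟩ | ⟨p4, hp4, hb⟩
          · cases hnk : n - k' with
            | zero => rw [hnk] at hq'; simp at hq'
            | succ j =>
              rw [hnk] at hq'
              simp [List.replicate_succ] at hq'
          · cases p4 <;> simp at hb


/-- the language of strings b zᵐ X zⁿ b (X ∈ {L,R}) is closed under
rewriting, non-empty, and every string in it contains a redex. -/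
theorem LRLang_closed_nonempty_redex :
    (∀ u ∈ LRLang, ∀ v, SRew LRRules u v → v ∈ LRLang) ∧
    LRLang.Nonempty ∧
    (∀ u ∈ LRLang, ∃ p s l r : List LRSym, (l, r) ∈ LRRules ∧ u = p ++ l ++ s) := by
  refine ⟨?_, ⟨pat 0 .L 0, pat_mem (.inl rfl) 0 0⟩, ?_⟩
  · rintro u ⟨m, n, X, hX, rfl⟩ v ⟨p, s, l, r, hr, hu, rfl⟩
    exact LR_closure m n X hX p s l r hr hu
  · rintro u ⟨m, n, X, hX, rfl⟩
    rcases hX with rfl | rfl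
    · cases m with
      | zero =>
        exact ⟨[], List.replicate n .z ++ [.b], [.b, .L], [.b, .R],
          by simp [LRRules], by simp [pat]⟩
      | succ m' =>
        exact ⟨.b :: List.replicate m' .z, List.replicate n .z ++ [.b], [.z, .L], [.L, .z],
          by simp [LRRules], by simp [pat, List.replicate_succ']⟩
    · cases n with
      | zero =>
        exact ⟨.b :: List.replicate m .z, [], [.R, .b], [.L, .z, .b],
          by simp [LRRules], by simp [pat]⟩
      | succ n' =>
        exact ⟨.b :: List.replicate m .z, List.replicate n' .z ++ [.b], [.R, .z], [.z, .R],
          by simp [LRRules], by simp [pat, List.replicate_succ]⟩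
end
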